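/- Let a, b be real numbers with 0 < a < 1 and 0 < b < 1. Then lim_{c→0⁺} Γ(c)·( e^{πic}·Γ(a−c)Γ(b−c)/(Γ(a)Γ(b)Γ(1−c)²)·₃F₂(c, c, c; 1+c−a, 1+c−b; 1) − 1 ) = πi − ψ(a) − ψ(b) + 2ψ(1). -/

import Mathlib

set_option autoImplicit false

open Complex Filter
open scoped Real Topology

/-- Pochhammer symbol `(a)_n = a(a+1)⋯(a+n−1)` for a complex number. -/
noncomputable def pochC (a : ℂ) (n : ℕ) : ℂ := ∏ k ∈ Finset.range n, (a + k)

/-- Generalized hypergeometric series `₃F₂(a₁,a₂,a₃;b₁,b₂;x)`. -/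
noncomputable def hyp3F2 (a₁ a₂ a₃ b₁ b₂ x : ℂ) : ℂ :=
  ∑' n : ℕ, (pochC a₁ n * pochC a₂ n * pochC a₃ n) /
    (pochC b₁ n * pochC b₂ n * (n.factorial : ℂ)) * x ^ n

/-- The digamma function `ψ(x) = Γ'(x)/Γ(x)` for real `x`. -/
noncomputable def digamma (x : ℝ) : ℝ := deriv Real.Gamma x / Real.Gamma x

/-!
Write the expression as `Γ(c) (G(c) H(c) - 1)`, where `G` is the Gamma prefactor and `H(c)` the
`₃F₂` series. Since `c Γ(c) → 1`, it behaves like `(G(c) - 1) / c + G(c) (H(c) - 1) / c`.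
As `G(0) = 1`, the first quotient tends to `G'(0)`, the logarithmic derivative of `G` at `0`,
which is `πi - ψ(a) - ψ(b) + 2ψ(1)`. Every term of `H(c) - 1` contains `(c)_n³` with `n ≥ 1`, so a
factor `c³`; comparing termwise with the convergent series `₃F₂(c₀, c₀, c₀; 1 - a, 1 - b; 1)`
gives `H(c) - 1 = O(c³)`, and the second quotient tends to `0`. That series converges by Euler's
limit formula for `Γ`, which makes its `n`-th term of order `n ^ (3 c₀ + a + b - 3)`.
-/

noncomputable def pochR (x : ℝ) (n : ℕ) : ℝ := ∏ k ∈ Finset.range n, (x + k)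

lemma pochC_ofReal (x : ℝ) (n : ℕ) : pochC x n = pochR x n := by
  simp [pochC, pochR]

lemma pochR_nonneg {x : ℝ} (hx : 0 ≤ x) (n : ℕ) : 0 ≤ pochR x n :=
  Finset.prod_nonneg fun _ _ => by positivity

lemma pochR_pos {x : ℝ} (hx : 0 < x) (n : ℕ) : 0 < pochR x n :=
  Finset.prod_pos fun _ _ => by positivity

lemma pochR_le_pochR {x y : ℝ} (hx : 0 ≤ x) (hxy : x ≤ y) (n : ℕ) : pochR x n ≤ pochR y n :=
  Finset.prod_le_prod (fun _ _ => by positivity) fun _ _ => by linarith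

lemma pochR_succ (x : ℝ) (n : ℕ) : pochR x (n + 1) = x * pochR (x + 1) n := by
  simp only [pochR, Finset.prod_range_succ', Nat.cast_add, Nat.cast_one, Nat.cast_zero, add_zero]
  rw [mul_comm]
  congr 1
  exact Finset.prod_congr rfl fun _ _ => by ring

lemma pochR_succ_le {c c₀ : ℝ} (hc : 0 ≤ c) (hc₀ : 0 < c₀) (hcc : c ≤ c₀) (n : ℕ) :
    pochR c (n + 1) ≤ c / c₀ * pochR c₀ (n + 1) := by
  rw [pochR_succ, pochR_succ]
  calc c * pochR (c + 1) n ≤ c * pochR (c₀ + 1) n :=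
        mul_le_mul_of_nonneg_left (pochR_le_pochR (by linarith) (by linarith) n) hc
    _ = c / c₀ * (c₀ * pochR (c₀ + 1) n) := by field_simp

lemma Real.GammaSeq_eq_pochR (s : ℝ) (n : ℕ) :
    Real.GammaSeq s n = (n : ℝ) ^ s * n.factorial / pochR s (n + 1) := rfl

noncomputable def hyp3F2Term (c u v : ℝ) (n : ℕ) : ℝ :=
  pochR c n ^ 3 / (pochR u n * pochR v n * n.factorial)

lemma hyp3F2_ofReal (c u v : ℝ) :
    hyp3F2 c c c u v 1 = ((∑' n, hyp3F2Term c u v n : ℝ) : ℂ) := by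
  rw [hyp3F2, Complex.ofReal_tsum]
  congr 1
  funext n
  simp only [pochC_ofReal, one_pow, mul_one, hyp3F2Term, ofReal_div, ofReal_pow, ofReal_mul,
    ofReal_natCast]
  ring

section hyp3F2Term

variable {c c₀ u v u' v' : ℝ}

lemma hyp3F2Term_zero : hyp3F2Term c u v 0 = 1 := by
  simp [hyp3F2Term, pochR]

lemma hyp3F2Term_nonneg (hc : 0 ≤ c) (hu : 0 ≤ u) (hv : 0 ≤ v) (n : ℕ) :
    0 ≤ hyp3F2Term c u v n := by
  have := pochR_nonneg hc n
  have := pochR_nonneg hu n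
  have := pochR_nonneg hv n
  unfold hyp3F2Term
  positivity

lemma hyp3F2Term_succ_eq (hc : 0 < c) (hu : 0 < u) (hv : 0 < v) {n : ℕ} (hn0 : 0 < n) :
    hyp3F2Term c u v (n + 1) = Real.GammaSeq u n * Real.GammaSeq v n / Real.GammaSeq c n ^ 3 /
      ((n + 1) * (n : ℝ) ^ (u + v - 3 * c)) := by
  have hn : (0 : ℝ) < n := by exact_mod_cast hn0
  have := pochR_pos hc (n + 1)
  have := pochR_pos hu (n + 1)
  have := pochR_pos hv (n + 1)
  have hpow : (n : ℝ) ^ u * (n : ℝ) ^ v = (n : ℝ) ^ (u + v - 3 * c) * ((n : ℝ) ^ c) ^ 3 := by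
    rw [← Real.rpow_natCast _ 3, ← Real.rpow_mul hn.le, ← Real.rpow_add hn, ← Real.rpow_add hn]
    ring_nf
  simp only [hyp3F2Term, Real.GammaSeq_eq_pochR, Nat.factorial_succ]
  push_cast
  field_simp
  rw [hpow, mul_comm]

lemma summable_hyp3F2Term (hc : 0 < c) (hu : 0 < u) (hv : 0 < v) (h : 3 * c < u + v) :
    Summable (hyp3F2Term c u v) := by
  set L := Real.Gamma u * Real.Gamma v / Real.Gamma c ^ 3
  have hL : 0 < L := by
    have := Real.Gamma_pos_of_pos hu
    have := Real.Gamma_pos_of_pos hv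
    have := Real.Gamma_pos_of_pos hc
    positivity
  have hlim : Tendsto (fun n => Real.GammaSeq u n * Real.GammaSeq v n / Real.GammaSeq c n ^ 3)
      atTop (𝓝 L) :=
    ((Real.GammaSeq_tendsto_Gamma u).mul (Real.GammaSeq_tendsto_Gamma v)).div
      ((Real.GammaSeq_tendsto_Gamma c).pow 3) (pow_ne_zero 3 (Real.Gamma_pos_of_pos hc).ne')
  have hbound : ∀ᶠ n : ℕ in atTop,
      ‖hyp3F2Term c u v (n + 1)‖ ≤ (L + 1) * ((n : ℝ) ^ (u + v - 3 * c + 1))⁻¹ := by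
    filter_upwards [hlim.eventually_le_const (lt_add_one L), eventually_gt_atTop 0]
      with n hfn hn0
    have hn : (0 : ℝ) < n := by exact_mod_cast hn0
    rw [Real.norm_of_nonneg (hyp3F2Term_nonneg hc.le hu.le hv.le _),
      hyp3F2Term_succ_eq hc hu hv hn0, ← div_eq_mul_inv]
    refine div_le_div₀ (by positivity) hfn (by positivity) ?_
    rw [Real.rpow_add_one hn.ne']
    nlinarith [Real.rpow_pos_of_pos hn (u + v - 3 * c)]
  have hdom :=
    (Real.summable_nat_rpow_inv.mpr (by linarith : 1 < u + v - 3 * c + 1)).mul_left (L + 1)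
  exact (summable_nat_add_iff 1).mp (hdom.of_norm_bounded_eventually_nat hbound)

lemma hyp3F2Term_succ_le (hc : 0 < c) (hcc : c ≤ c₀) (hu : 0 < u) (huu : u ≤ u')
    (hv : 0 < v) (hvv : v ≤ v') (n : ℕ) :
    hyp3F2Term c u' v' (n + 1) ≤ (c / c₀) ^ 3 * hyp3F2Term c₀ u v (n + 1) := by
  have hc₀ : 0 < c₀ := hc.trans_le hcc
  have := pochR_pos hu (n + 1)
  have := pochR_pos hv (n + 1)
  unfold hyp3F2Term
  rw [← mul_div_assoc, ← mul_pow]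
  refine div_le_div₀ (by have := pochR_pos hc₀ (n + 1); positivity)
    (pow_le_pow_left₀ (pochR_nonneg hc.le _) (pochR_succ_le hc.le hc₀ hcc n) 3)
    (by positivity) ?_
  exact mul_le_mul_of_nonneg_right
    (mul_le_mul (pochR_le_pochR hu.le huu _) (pochR_le_pochR hv.le hvv _) (pochR_nonneg hv.le _)
      (pochR_nonneg (hu.le.trans huu) _)) (Nat.cast_nonneg _)

lemma abs_tsum_hyp3F2Term_sub_one_le (hc : 0 < c) (hcc : c ≤ c₀) (hu : 0 < u) (huu : u ≤ u')
    (hv : 0 < v) (hvv : v ≤ v') (hs : Summable (hyp3F2Term c₀ u v)) :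
    |∑' n, hyp3F2Term c u' v' n - 1| ≤ (c / c₀) ^ 3 * ∑' n, hyp3F2Term c₀ u v n := by
  have hc₀ : 0 < c₀ := hc.trans_le hcc
  have hle := hyp3F2Term_succ_le hc hcc hu huu hv hvv
  have hs' : Summable fun n => hyp3F2Term c₀ u v (n + 1) := (summable_nat_add_iff 1).mpr hs
  have ht : Summable fun n => hyp3F2Term c u' v' (n + 1) :=
    .of_nonneg_of_le (fun n => hyp3F2Term_nonneg hc.le (hu.le.trans huu) (hv.le.trans hvv) _)
      hle (hs'.mul_left _)
  rw [((summable_nat_add_iff 1).mp ht).tsum_eq_zero_add, hyp3F2Term_zero, add_sub_cancel_left,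
    abs_of_nonneg (tsum_nonneg fun n => hyp3F2Term_nonneg hc.le (hu.le.trans huu)
      (hv.le.trans hvv) _)]
  calc ∑' n, hyp3F2Term c u' v' (n + 1) ≤ ∑' n, (c / c₀) ^ 3 * hyp3F2Term c₀ u v (n + 1) :=
        ht.tsum_le_tsum hle (hs'.mul_left _)
    _ ≤ (c / c₀) ^ 3 * ∑' n, hyp3F2Term c₀ u v n := by
        rw [tsum_mul_left, hs.tsum_eq_zero_add, hyp3F2Term_zero]
        gcongr
        linarith

end hyp3F2Term

lemma tendsto_hyp3F2_sub_one_div {a b : ℝ} (ha : a < 1) (hb : b < 1) :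
    Tendsto (fun c : ℝ => (hyp3F2 c c c (1 + (c : ℂ) - a) (1 + (c : ℂ) - b) 1 - 1) / c)
      (𝓝[>] 0) (𝓝 0) := by
  obtain ⟨c₀, hc₀, hc₀ab⟩ : ∃ c₀ : ℝ, 0 < c₀ ∧ 3 * c₀ < (1 - a) + (1 - b) :=
    ⟨(2 - a - b) / 6, by linarith, by linarith⟩
  have hS : Summable (hyp3F2Term c₀ (1 - a) (1 - b)) :=
    summable_hyp3F2Term hc₀ (by linarith) (by linarith) hc₀ab
  set S := ∑' n, hyp3F2Term c₀ (1 - a) (1 - b) n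
  refine squeeze_zero_norm' (a := fun c => S / c₀ ^ 3 * c ^ 2) ?_ ?_
  · filter_upwards [Ioc_mem_nhdsGT hc₀] with c ⟨hc, hcc⟩
    have hH : hyp3F2 c c c (1 + (c : ℂ) - a) (1 + (c : ℂ) - b) 1 - 1 =
        ((∑' n, hyp3F2Term c (1 + c - a) (1 + c - b) n - 1 : ℝ) : ℂ) := by
      have hca : 1 + (c : ℂ) - a = ((1 + c - a : ℝ) : ℂ) := by push_cast; ring
      have hcb : 1 + (c : ℂ) - b = ((1 + c - b : ℝ) : ℂ) := by push_cast; ring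
      rw [hca, hcb, hyp3F2_ofReal]
      push_cast
      rfl
    rw [hH, ← Complex.ofReal_div, Complex.norm_real, Real.norm_eq_abs, abs_div, abs_of_pos hc,
      div_le_iff₀ hc]
    calc _ ≤ (c / c₀) ^ 3 * S := abs_tsum_hyp3F2Term_sub_one_le hc hcc (by linarith)
          (by linarith) (by linarith) (by linarith) hS
      _ = S / c₀ ^ 3 * c ^ 2 * c := by ring
  · refine tendsto_nhdsWithin_of_tendsto_nhds ?_
    simpa using ((continuous_pow 2).tendsto (0 : ℝ)).const_mul (S / c₀ ^ 3)

lemma hasDerivAt_Gamma_ofReal {x : ℝ} (hx : 0 < x) :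
    HasDerivAt Complex.Gamma (Complex.Gamma x * _root_.digamma x) x := by
  have hx' : ∀ m : ℕ, x ≠ -m := fun m h => by linarith [m.cast_nonneg (α := ℝ)]
  have hC := (Complex.differentiableAt_Gamma x (by exact_mod_cast hx')).hasDerivAt
  have hR := (Real.differentiableAt_Gamma hx').hasDerivAt
  have hderiv : deriv Complex.Gamma x = deriv Real.Gamma x := by
    have h := hC.comp_ofReal
    simp only [Complex.Gamma_ofReal] at h
    exact h.unique hR.ofReal_comp
  rw [Complex.Gamma_ofReal, ← Complex.ofReal_mul, _root_.digamma,
    mul_div_cancel₀ _ (Real.Gamma_pos_of_pos hx).ne', ← hderiv]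
  exact hC

lemma hasDerivAt_Gamma_const_sub {x : ℝ} (hx : 0 < x) :
    HasDerivAt (fun z : ℂ => Complex.Gamma (x - z)) (-(Complex.Gamma x * _root_.digamma x)) 0 :=
  HasDerivAt.comp_const_sub (x : ℂ) 0 (by simpa using hasDerivAt_Gamma_ofReal hx)

noncomputable def gammaFactor (a b : ℝ) (z : ℂ) : ℂ :=
  Complex.exp ((π : ℂ) * I * z) * Complex.Gamma ((a : ℂ) - z) * Complex.Gamma ((b : ℂ) - z) /
    (Complex.Gamma (a : ℂ) * Complex.Gamma (b : ℂ) * Complex.Gamma (1 - z) ^ 2)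

section gammaFactor

variable {a b : ℝ}

lemma gammaFactor_zero (ha : 0 < a) (hb : 0 < b) : gammaFactor a b 0 = 1 := by
  simp [gammaFactor, Complex.Gamma_ne_zero_of_re_pos, ha, hb]

lemma hasDerivAt_gammaFactor (ha : 0 < a) (hb : 0 < b) :
    HasDerivAt (gammaFactor a b)
      ((π : ℂ) * I - (_root_.digamma a : ℝ) - (_root_.digamma b : ℝ) + 2 * (_root_.digamma 1 : ℝ))
      0 := by
  have hexp : HasDerivAt (fun z : ℂ => Complex.exp ((π : ℂ) * I * z)) ((π : ℂ) * I) 0 := by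
    simpa using ((hasDerivAt_id (0 : ℂ)).const_mul ((π : ℂ) * I)).cexp
  have hone : HasDerivAt (fun z : ℂ => Complex.Gamma (1 - z)) (-(_root_.digamma 1 : ℝ)) 0 := by
    simpa using hasDerivAt_Gamma_const_sub one_pos
  have hnum := (hexp.mul (hasDerivAt_Gamma_const_sub ha)).mul (hasDerivAt_Gamma_const_sub hb)
  have hden := (hone.pow 2).const_mul (Complex.Gamma a * Complex.Gamma b)
  have hΓa : Complex.Gamma a ≠ 0 := Complex.Gamma_ne_zero_of_re_pos (by simpa)
  have hΓb : Complex.Gamma b ≠ 0 := Complex.Gamma_ne_zero_of_re_pos (by simpa)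
  refine (hnum.div hden (by simp [hΓa, hΓb])).congr_deriv ?_
  simp only [sub_zero, mul_zero, exp_zero, mul_neg, one_mul, Pi.mul_apply, Pi.pow_apply, Gamma_one,
    one_pow, mul_one, Nat.cast_ofNat, Nat.add_one_sub_one, sub_neg_eq_add]
  field_simp
  ring

end gammaFactor

lemma tendsto_Gamma_mul_mul_sub_one {G : ℂ → ℂ} {H : ℝ → ℂ} {D : ℂ} (hG : HasDerivAt G D 0)
    (hG0 : G 0 = 1) (hH : Tendsto (fun c : ℝ => (H c - 1) / c) (𝓝[>] 0) (𝓝 0)) :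
    Tendsto (fun c : ℝ => Complex.Gamma c * (G c * H c - 1)) (𝓝[>] 0) (𝓝 D) := by
  have hofReal : Tendsto (fun c : ℝ => (c : ℂ)) (𝓝[>] 0) (𝓝[≠] 0) :=
    tendsto_nhdsWithin_iff.mpr
      ⟨(Complex.continuous_ofReal.tendsto' 0 0 Complex.ofReal_zero).mono_left nhdsWithin_le_nhds,
        eventually_nhdsWithin_of_forall fun c (hc : 0 < c) =>
          Set.mem_compl_singleton_iff.mpr (by exact_mod_cast hc.ne')⟩
  have hpole := Complex.tendsto_self_mul_Gamma_nhds_zero.comp hofReal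
  have hslope : Tendsto (fun c : ℝ => (G c - 1) / c) (𝓝[>] 0) (𝓝 D) := by
    refine ((hasDerivAt_iff_tendsto_slope.mp hG.comp_ofReal).mono_left
      (nhdsWithin_mono 0 fun c (hc : 0 < c) => hc.ne')).congr fun c => ?_
    simp [slope_def_module, hG0, div_eq_inv_mul]
  have hGc : Tendsto (fun c : ℝ => G c) (𝓝[>] 0) (𝓝 1) :=
    hG0 ▸ hG.continuousAt.tendsto.comp (hofReal.mono_right nhdsWithin_le_nhds)
  have := hpole.mul (hslope.add (hGc.mul hH))
  rw [one_mul, mul_zero, add_zero] at this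
  refine this.congr' ?_
  filter_upwards [self_mem_nhdsWithin] with c (hc : 0 < c)
  have : (c : ℂ) ≠ 0 := by exact_mod_cast hc.ne'
  simp only [Function.comp_apply]
  field_simp
  ring

theorem stmt2 (a b : ℝ) (ha0 : 0 < a) (ha1 : a < 1) (hb0 : 0 < b) (hb1 : b < 1) :
    Tendsto
      (fun c : ℝ =>
        Complex.Gamma (c : ℂ) *
          (Complex.exp ((π : ℂ) * I * c) * Complex.Gamma ((a : ℂ) - c) *
            Complex.Gamma ((b : ℂ) - c) /
            (Complex.Gamma (a : ℂ) * Complex.Gamma (b : ℂ) *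
              Complex.Gamma (1 - (c : ℂ)) ^ 2) *
            hyp3F2 c c c (1 + (c : ℂ) - a) (1 + (c : ℂ) - b) 1 - 1))
      (𝓝[>] (0 : ℝ))
      (𝓝 ((π : ℂ) * I - (digamma a : ℝ) - (digamma b : ℝ) + 2 * (digamma 1 : ℝ))) :=
  tendsto_Gamma_mul_mul_sub_one (G := gammaFactor a b)
    (H := fun c : ℝ => hyp3F2 c c c (1 + (c : ℂ) - a) (1 + (c : ℂ) - b) 1)
    (hasDerivAt_gammaFactor ha0 hb0) (gammaFactor_zero ha0 hb0) (tendsto_hyp3F2_sub_one_div ha1 hb1)
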